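/- Let k̂_0, …, k̂_{n−1} > 0 be positive reals. Then every point v of the Vandermonde simplex V_g(z) := conv( g, p^{(0)}, p^{(0)} + (k̂_1/k̂_0) p^{(1)}, …, Σ_{i=0}^{n−1} (k̂_i/k̂_0) p^{(i)} ) satisfies ‖v − g‖ ≤ γ ‖z − ğ‖, where γ = √n · max(k̂_0, …, k̂_{n−1}) / k̂_0, z = (p^{(0)}, …, p^{(n−1)}) ∈ (ℝ^d)^n, and ğ = (g, 0, …, 0). -/

import Mathlib

/-!
Distance to `g` is convex, so it suffices to bound it at the vertices. Since the coefficient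
of `p⁽⁰⁾` is `k̂₀ / k̂₀ = 1`, the `j`-th vertex minus `g` is `∑_{i<j} (k̂ᵢ / k̂₀) (z - ğ)ᵢ`; its
norm is at most `max k̂ / k̂₀` times the sum of the block norms of `z - ğ`, which
Cauchy–Schwarz bounds by `√n ‖z - ğ‖`.
-/

open Finset

theorem PiLp.sum_norm_le_sqrt_card_mul_norm {ι : Type*} [Fintype ι] {β : ι → Type*}
    [∀ i, SeminormedAddCommGroup (β i)] (x : PiLp 2 β) :
    ∑ i, ‖x i‖ ≤ √(Fintype.card ι) * ‖x‖ := by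
  rw [PiLp.norm_eq_of_L2, ← Real.sqrt_mul (Nat.cast_nonneg _)]
  refine Real.le_sqrt_of_sq_le ?_
  simpa using sq_sum_le_card_mul_sum_sq (s := univ) (f := fun i => ‖x i‖)

theorem norm_sum_smul_le_mul_sum_norm {𝕜 ι E : Type*} [NormedField 𝕜] [SeminormedAddCommGroup E]
    [NormedSpace 𝕜 E] [Fintype ι] (s : Finset ι) {c : ι → 𝕜} {C : ℝ} (hc : ∀ i, ‖c i‖ ≤ C)
    (w : ι → E) : ‖∑ i ∈ s, c i • w i‖ ≤ C * ∑ i, ‖w i‖ := by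
  calc ‖∑ i ∈ s, c i • w i‖ ≤ ∑ i ∈ s, ‖c i‖ * ‖w i‖ := by
        simpa only [norm_smul] using norm_sum_le s (fun i => c i • w i)
    _ ≤ ∑ i ∈ s, C * ‖w i‖ := by gcongr with i; exact hc i
    _ ≤ ∑ i, C * ‖w i‖ :=
        sum_le_sum_of_subset_of_nonneg (subset_univ s) fun i _ _ =>
          mul_nonneg ((norm_nonneg _).trans (hc i)) (norm_nonneg _)
    _ = C * ∑ i, ‖w i‖ := (mul_sum _ _ _).symm

theorem sum_smul_sub_eq_sub_of_eq_zero_of_ne {R ι E : Type*} [Ring R] [AddCommGroup E]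
    [Module R E] {s : Finset ι} {i₀ : ι} (hi₀ : i₀ ∈ s) {c : ι → R} (hc : c i₀ = 1)
    (p : ι → E) {q : ι → E} (hq : ∀ i, i ≠ i₀ → q i = 0) :
    ∑ i ∈ s, c i • (p i - q i) = ∑ i ∈ s, c i • p i - q i₀ := by
  have hq_sum : ∑ i ∈ s, c i • q i = q i₀ := by
    rw [sum_eq_single_of_mem i₀ hi₀ fun i _ hi => by rw [hq i hi, smul_zero], hc, one_smul]
  simp only [smul_sub, sum_sub_distrib, hq_sum]

theorem norm_sum_smul_sub_le_sqrt_card_mul {ι E : Type*} [Fintype ι] [SeminormedAddCommGroup E]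
    [NormedSpace ℝ E] {s : Finset ι} {i₀ : ι} (hi₀ : i₀ ∈ s) {c : ι → ℝ} {C : ℝ}
    (hc : ∀ i, ‖c i‖ ≤ C) (hc₀ : c i₀ = 1) (x y : PiLp 2 (fun _ : ι => E))
    (hy : ∀ i, i ≠ i₀ → y i = 0) :
    ‖∑ i ∈ s, c i • x i - y i₀‖ ≤ √(Fintype.card ι) * C * ‖x - y‖ := by
  have hC : 0 ≤ C := (norm_nonneg _).trans (hc i₀)
  rw [← sum_smul_sub_eq_sub_of_eq_zero_of_ne hi₀ hc₀ _ hy]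
  calc ‖∑ i ∈ s, c i • (x i - y i)‖ ≤ C * ∑ i, ‖(x - y) i‖ :=
        norm_sum_smul_le_mul_sum_norm s hc (x - y)
    _ ≤ C * (√(Fintype.card ι) * ‖x - y‖) := by
        gcongr
        exact PiLp.sum_norm_le_sqrt_card_mul_norm (x - y)
    _ = √(Fintype.card ι) * C * ‖x - y‖ := by ring

theorem norm_sub_le_of_mem_convexHull_range {ι E : Type*} [SeminormedAddCommGroup E]
    [NormedSpace ℝ E] {V : ι → E} {v g : E} (hv : v ∈ convexHull ℝ (Set.range V)) {C : ℝ}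
    (hV : ∀ j, ‖V j - g‖ ≤ C) : ‖v - g‖ ≤ C := by
  obtain ⟨_, ⟨j, rfl⟩, hvj⟩ := convexHull_exists_dist_ge hv g
  rw [dist_eq_norm, dist_eq_norm] at hvj
  exact hvj.trans (hV j)

theorem stmt5 {n d : ℕ} (hn : 0 < n)
    (k : Fin n → ℝ) (hk : ∀ i, 0 < k i)
    (g : EuclideanSpace ℝ (Fin d)) (p : Fin n → EuclideanSpace ℝ (Fin d))
    (z gbar : PiLp 2 (fun _ : Fin n => EuclideanSpace ℝ (Fin d)))
    (hz : ∀ i, z i = p i)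
    (hgbar : ∀ i : Fin n, gbar i = if (i : ℕ) = 0 then g else 0)
    (V : Fin (n + 1) → EuclideanSpace ℝ (Fin d))
    (hV0 : V 0 = g)
    (hV : ∀ j : Fin (n + 1), 0 < (j : ℕ) →
      V j = ∑ i ∈ Finset.univ.filter (fun i : Fin n => (i : ℕ) < (j : ℕ)),
              (k i / k ⟨0, hn⟩) • p i) :
    ∀ v ∈ convexHull ℝ (Set.range V),
      ‖v - g‖ ≤ Real.sqrt n *
          (Finset.univ.sup' ⟨⟨0, hn⟩, Finset.mem_univ _⟩ k / k ⟨0, hn⟩) * ‖z - gbar‖ := by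
  set i₀ : Fin n := ⟨0, hn⟩
  set M := univ.sup' ⟨i₀, mem_univ _⟩ k
  have hcoeff : ∀ i, ‖k i / k i₀‖ ≤ M / k i₀ := fun i => by
    rw [Real.norm_eq_abs, abs_of_pos (div_pos (hk i) (hk i₀))]
    gcongr
    exacts [(hk i₀).le, le_sup' k (mem_univ i)]
  have hg : gbar i₀ = g := by simp [hgbar, i₀]
  have hgbar_ne : ∀ i, i ≠ i₀ → gbar i = 0 := fun i hi => by
    simp [hgbar, show (i : ℕ) ≠ 0 from fun h => hi (Fin.ext h)]
  intro v hv
  refine norm_sub_le_of_mem_convexHull_range hv fun j => ?_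
  rcases Nat.eq_zero_or_pos j with hj | hj
  · rw [show j = 0 from Fin.ext hj, hV0, sub_self, norm_zero]
    have hM : 0 ≤ M / k i₀ := (norm_nonneg _).trans (hcoeff i₀)
    positivity
  · simp only [hV j hj, ← hz, ← hg]
    simpa using norm_sum_smul_sub_le_sqrt_card_mul (by simpa [i₀] using hj) hcoeff
      (div_self (hk i₀).ne') z gbar hgbar_ne
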